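/- arXiv:math/0612447 — 2 statements merged into one kernel-verified Lean document; each statement's English description precedes it below -/
import Mathlib

section
/- Let p, q, r ≥ 1, let a ≤ min(p, r) and b ≤ min(q, r) be natural numbers with a + b ≤ r, and let c₁, …, c_a and d₁, …, d_b be natural-number exponents. Then the polynomial P(X, Y) = Δ₁(X)^{c₁} ⋯ Δ_a(X)^{c_a} · ~Δ₁(Y)^{d₁} ⋯ ~Δ_b(Y)^{d_b} in the entries of X ∈ M_{p×r} and Y ∈ M_{q×r} is harmonic: Δ_{ij} P = 0 for all 1 ≤ i ≤ p and 1 ≤ j ≤ q. -/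
/-!
Products of powers of the leading principal minors `Δⱼ(X)`, `j ≤ a`, and of the
trailing minors `~Δⱼ(Y)`, `j ≤ b`, with `a + b ≤ r`, are harmonic for all the
operators `Δ_{ij} = Σ_ν ∂²/∂X_{iν}∂Y_{jν}`.
-/

open MvPolynomial

/-- The leading principal `j×j` minor of a `p×r` matrix. -/
def leadMinor {R : Type*} [CommRing R] {p r : ℕ} (j : ℕ) (hjp : j ≤ p) (hjr : j ≤ r)
    (X : Matrix (Fin p) (Fin r) R) : R :=
  (Matrix.of fun k l : Fin j => X (Fin.castLE hjp k) (Fin.castLE hjr l)).det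

/-- The trailing `j×j` minor of a `q×r` matrix: the determinant of the
bottom-right `j×j` submatrix `(Y_{q−j+k, r−j+l})`. -/
def trailMinor {R : Type*} [CommRing R] {q r : ℕ} (j : ℕ) (hjq : j ≤ q) (hjr : j ≤ r)
    (Y : Matrix (Fin q) (Fin r) R) : R :=
  (Matrix.of fun k l : Fin j =>
    Y ⟨q - j + k, by have := k.isLt; omega⟩ ⟨r - j + l, by have := l.isLt; omega⟩).det

/-- The generic matrix `X` of variables `X_{iν}`. -/
noncomputable def genX (R : Type*) [CommRing R] (p q r : ℕ) :
    Matrix (Fin p) (Fin r) (MvPolynomial ((Fin p × Fin r) ⊕ (Fin q × Fin r)) R) :=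
  Matrix.of fun i ν => X (Sum.inl (i, ν))

/-- The generic matrix `Y` of variables `Y_{jν}`. -/
noncomputable def genY (R : Type*) [CommRing R] (p q r : ℕ) :
    Matrix (Fin q) (Fin r) (MvPolynomial ((Fin p × Fin r) ⊕ (Fin q × Fin r)) R) :=
  Matrix.of fun j ν => X (Sum.inr (j, ν))

/-!
`F = Δ₁(X)^{c₁}⋯Δ_a(X)^{c_a}` involves only the variables `X_{iν}` with `ν < a`, and
`G = ~Δ₁(Y)^{d₁}⋯~Δ_b(Y)^{d_b}` only the variables `Y_{jν}` with `ν ≥ r - b`. Hence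
`∂²(FG)/∂X_{iν}∂Y_{jν} = ∂F/∂X_{iν} · ∂G/∂Y_{jν}`, and since `a ≤ r - b` every column `ν`
kills one of the two factors.
-/

namespace MvPolynomial

variable {σ R : Type*} [CommSemiring R] {S T : Set σ}

theorem pderiv_mem_supported (n : σ) {f : MvPolynomial σ R} (hf : f ∈ supported R S) :
    pderiv n f ∈ supported R S := by
  classical
  rw [supported_eq_adjoin_X] at hf ⊢
  induction hf using Algebra.adjoin_induction with
  | mem _ hx =>
    obtain ⟨i, -, rfl⟩ := hx
    rw [pderiv_X, Pi.single_apply]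
    split_ifs
    · exact one_mem _
    · exact zero_mem _
  | algebraMap c => rw [algebraMap_eq, pderiv_C]; exact zero_mem _
  | add _ _ _ _ hx hy => rw [map_add]; exact add_mem hx hy
  | mul _ _ hx' hy' hx hy => rw [pderiv_mul]; exact add_mem (mul_mem hx hy') (mul_mem hx' hy)

theorem pderiv_eq_zero_of_mem_supported {n : σ} (hn : n ∉ S) {f : MvPolynomial σ R}
    (hf : f ∈ supported R S) : pderiv n f = 0 :=
  pderiv_eq_zero_of_notMem_vars fun h => hn (mem_supported.mp hf h)

theorem pderiv_pderiv_mul_of_mem_supported {m n : σ} {f g : MvPolynomial σ R}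
    (hf : f ∈ supported R S) (hg : g ∈ supported R T) (hnS : n ∉ S) (hmT : m ∉ T) :
    pderiv m (pderiv n (f * g)) = pderiv m f * pderiv n g := by
  rw [pderiv_mul, pderiv_eq_zero_of_mem_supported hnS hf, zero_mul, zero_add, pderiv_mul,
    pderiv_eq_zero_of_mem_supported hmT (pderiv_mem_supported n hg), mul_zero, add_zero]

end MvPolynomial

section Minors

variable {A S : Type*} [CommRing A] [SetLike S A] [SubringClass S A] {s : S}

theorem Matrix.det_mem_of_forall_mem {n : Type*} [Fintype n] [DecidableEq n]
    {M : Matrix n n A} (hM : ∀ i j, M i j ∈ s) : M.det ∈ s := by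
  rw [Matrix.det_apply]
  refine sum_mem fun _ _ => ?_
  rw [Units.smul_def, zsmul_eq_mul]
  exact mul_mem (intCast_mem s _) (prod_mem fun _ _ => hM _ _)

theorem leadMinor_mem {p r j a : ℕ} (hjp : j ≤ p) (hjr : j ≤ r) (hja : j ≤ a)
    {M : Matrix (Fin p) (Fin r) A} (hM : ∀ k (l : Fin r), (l : ℕ) < a → M k l ∈ s) :
    leadMinor j hjp hjr M ∈ s :=
  Matrix.det_mem_of_forall_mem fun _ l => hM _ _ (by simp only [Fin.val_castLE]; omega)

theorem trailMinor_mem {q r j b : ℕ} (hjq : j ≤ q) (hjr : j ≤ r) (hjb : j ≤ b)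
    {M : Matrix (Fin q) (Fin r) A} (hM : ∀ k (l : Fin r), r - b ≤ (l : ℕ) → M k l ∈ s) :
    trailMinor j hjq hjr M ∈ s :=
  Matrix.det_mem_of_forall_mem fun _ _ => hM _ _ (by dsimp only; omega)

end Minors

section GenericMatrices

variable {R : Type*} [CommRing R] {p q r : ℕ}

theorem prod_pow_leadMinor_genX_mem_supported {a : ℕ} (hap : a ≤ p) (har : a ≤ r)
    (c : Fin a → ℕ) :
    ∏ k : Fin a, leadMinor (k + 1) (by omega) (by omega) (genX R p q r) ^ c k ∈
      supported R (Sum.inl '' {t : Fin p × Fin r | (t.2 : ℕ) < a}) :=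
  prod_mem fun k _ => pow_mem (leadMinor_mem _ _ k.isLt fun _ _ hν =>
    Algebra.subset_adjoin (Set.mem_image_of_mem X (Set.mem_image_of_mem Sum.inl hν))) _

theorem prod_pow_trailMinor_genY_mem_supported {b : ℕ} (hbq : b ≤ q) (hbr : b ≤ r)
    (d : Fin b → ℕ) :
    ∏ k : Fin b, trailMinor (k + 1) (by omega) (by omega) (genY R p q r) ^ d k ∈
      supported R (Sum.inr '' {t : Fin q × Fin r | r - b ≤ (t.2 : ℕ)}) :=
  prod_mem fun k _ => pow_mem (trailMinor_mem _ _ k.isLt fun j ν hν =>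
    Algebra.subset_adjoin (Set.mem_image_of_mem X (Set.mem_image_of_mem Sum.inr
      (show (j, ν) ∈ {t : Fin q × Fin r | r - b ≤ (t.2 : ℕ)} from hν)))) _

end GenericMatrices

/-- The polynomial `P(X,Y) = Δ₁(X)^{c₁}⋯Δ_a(X)^{c_a} · ~Δ₁(Y)^{d₁}⋯~Δ_b(Y)^{d_b}`
is harmonic: `Δ_{ij} P = 0` for all `i`, `j`, provided `a ≤ min(p,r)`,
`b ≤ min(q,r)` and `a + b ≤ r`. -/
theorem minor_product_harmonic {R : Type*} [CommRing R]
    (p q r a b : ℕ)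
    (hap : a ≤ p) (har : a ≤ r) (hbq : b ≤ q) (hbr : b ≤ r) (hab : a + b ≤ r)
    (c : Fin a → ℕ) (d : Fin b → ℕ) :
    ∀ (i : Fin p) (j : Fin q),
      (∑ ν : Fin r,
        (pderiv (Sum.inl (i, ν)))
          ((pderiv (Sum.inr (j, ν)))
            ((∏ k : Fin a,
                (leadMinor (k + 1) (by have := k.isLt; omega) (by have := k.isLt; omega)
                  (genX R p q r)) ^ (c k)) *
             (∏ k : Fin b,
                (trailMinor (k + 1) (by have := k.isLt; omega) (by have := k.isLt; omega)
                  (genY R p q r)) ^ (d k))))) = 0 := by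
  intro i j
  have hF := prod_pow_leadMinor_genX_mem_supported (R := R) (q := q) hap har c
  have hG := prod_pow_trailMinor_genY_mem_supported (R := R) (p := p) hbq hbr d
  refine Finset.sum_eq_zero fun ν _ => ?_
  rw [pderiv_pderiv_mul_of_mem_supported hF hG (by simp) (by simp)]
  rcases lt_or_ge (ν : ℕ) a with hν | hν
  · rw [pderiv_eq_zero_of_mem_supported (by simp; omega) hG, mul_zero]
  · rw [pderiv_eq_zero_of_mem_supported (by simpa using hν) hF, zero_mul]
end

section
/- Let A be a group, let K' ⊆ K be subgroups of A, let Q be a subgroup of A, and let Z be a subgroup of Q contained in the center of A. Let D be a set with a Q-action on which Z acts trivially, and let Q act on D × A by q·(d, a) = (q·d, q a) and any subgroup L ≤ A act on the right by (d, a)·l = (d, a l). Fix z ∈ D and g ∈ A, and assume that every q ∈ Q satisfying q·z = z and q ∈ g K g⁻¹ lies in Z. Then K' (K ∩ Z) is a subgroup of K, and the map k ↦ [Q-orbit of (z, g k) modulo K'] induces a well-defined bijection from the coset space K / (K'(K ∩ Z)) onto the fiber, over the class of (z, g), of the natural projection Q\(D × A)/K' → Q\(D × A)/K. In particular that fiber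 has cardinality |K / (K'(K ∩ Z))|. -/
/-!
If `(z, g k₂) = (q • z, q g k₁ k')` with `q ∈ Q`, `k' ∈ K'`, then `q` fixes `z` and
`g⁻¹ q g = k₂ k'⁻¹ k₁⁻¹ ∈ K`, so `q ∈ Z`; being central, `q = g⁻¹ q g ∈ K ∩ Z` and
`k₁⁻¹ k₂ = k' q`. Conversely, elements of `Z` fix `z` and commute with everything, so right
multiplication by `K'(K ∩ Z)` does not change the class of `(z, g k)` modulo `K'`. Hence
`k ↦ [(z, g k)]` identifies exactly the cosets of `K'(K ∩ Z)`, and every class over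
`[(z, g)]` is of this form. `K'(K ∩ Z)` is a subgroup because `K ∩ Z` is central, hence normal.
-/

open scoped Pointwise

/-- The double-orbit relation on `D × A`: `s ~ t` iff `t = (q • s₁, q s₂ k)`
for some `q ∈ Q`, `k ∈ K`.  The quotient `Quot (dcRel Q K)` is `Q\(D × A)/K`. -/
def dcRel {A : Type*} [Group A] {D : Type*} (Q : Subgroup A) [MulAction Q D]
    (K : Subgroup A) : (D × A) → (D × A) → Prop :=
  fun s t => ∃ q : Q, ∃ k ∈ K, t = (q • s.1, (q : A) * s.2 * k)

/-- The natural projection `Q\(D × A)/K' → Q\(D × A)/K` (for `K' ≤ K`). -/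
def dcProj {A : Type*} [Group A] {D : Type*} (Q : Subgroup A) [MulAction Q D]
    (K' K : Subgroup A) (hK'K : K' ≤ K) :
    Quot (dcRel (D := D) Q K') → Quot (dcRel (D := D) Q K) :=
  Quot.lift (fun s => Quot.mk (dcRel (D := D) Q K) s)
    (fun s t h => by
      obtain ⟨qq, k, hk, ht⟩ := h
      exact Quot.sound ⟨qq, k, hK'K hk, ht⟩)

theorem Quot.lift_injective_of_iff {α β : Sort*} {r : α → α → Prop} (f : α → β)
    (h : ∀ a b, r a b ↔ f a = f b) : Function.Injective (Quot.lift f fun a b => (h a b).1) := by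
  rintro ⟨a⟩ ⟨b⟩ hab
  exact Quot.sound ((h a b).2 hab)

theorem Subgroup.normal_of_le_center {G : Type*} [Group G] {H : Subgroup G}
    (hH : H ≤ Subgroup.center G) : H.Normal where
  conj_mem n hn g := by
    rwa [Subgroup.mem_center_iff.mp (hH hn) g, mul_inv_cancel_right]

section DoubleCoset

variable {A : Type*} [Group A] {D : Type*} {Q : Subgroup A} [MulAction Q D]

theorem dcRel_equivalence (K : Subgroup A) : Equivalence (dcRel (D := D) Q K) where
  refl _ := ⟨1, 1, one_mem _, by simp⟩
  symm := by
    rintro s t ⟨q, k, hk, rfl⟩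
    exact ⟨q⁻¹, k⁻¹, inv_mem hk, by simp [smul_smul, mul_assoc]⟩
  trans := by
    rintro s t u ⟨q, k, hk, rfl⟩ ⟨q', k', hk', rfl⟩
    exact ⟨q' * q, k * k', mul_mem hk hk', by simp [smul_smul, mul_assoc]⟩

theorem dcRel_mk_eq_mk_iff {K : Subgroup A} {s t : D × A} :
    Quot.mk (dcRel Q K) s = Quot.mk _ t ↔ dcRel Q K s t :=
  (dcRel_equivalence K).quot_mk_eq_iff s t

theorem dcRel_mul_right {K : Subgroup A} (d : D) (a : A) {k : A} (hk : k ∈ K) :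
    dcRel Q K (d, a) (d, a * k) :=
  ⟨1, k, hk, by simp⟩

theorem dcProj_eq_mk_iff {K' K : Subgroup A} (hK'K : K' ≤ K)
    (y : Quot (dcRel (D := D) Q K')) (d : D) (a : A) :
    dcProj Q K' K hK'K y = Quot.mk _ (d, a) ↔ ∃ k ∈ K, y = Quot.mk _ (d, a * k) := by
  constructor
  · induction y using Quot.ind with
    | mk s =>
      intro hs
      obtain ⟨q, k, hk, rfl⟩ := dcRel_mk_eq_mk_iff.mp (Eq.symm hs)
      refine ⟨k, hk, Quot.sound ⟨q⁻¹, 1, one_mem _, ?_⟩⟩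
      simp [mul_assoc]
  · rintro ⟨k, hk, rfl⟩
    exact (Quot.sound (dcRel_mul_right d a hk)).symm

end DoubleCoset

section Fiber

variable {A : Type*} [Group A] {D : Type*} {Q K K' Z : Subgroup A} [MulAction Q D]

theorem dcRel_mul_mul_central (hZQ : Z ≤ Q) (hZcent : Z ≤ Subgroup.center A)
    (hZtriv : ∀ q : Q, (q : A) ∈ Z → ∀ d : D, q • d = d) (d : D) (a : A) {k w : A}
    (hk : k ∈ K') (hw : w ∈ Z) : dcRel Q K' (d, a) (d, a * (k * w)) := by
  refine ⟨⟨w, hZQ hw⟩, k, hk, Prod.ext (hZtriv _ hw d).symm ?_⟩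
  change a * (k * w) = w * a * k
  rw [← mul_assoc, Subgroup.mem_center_iff.mp (hZcent hw), mul_assoc]

theorem mem_mul_inf_of_dcRel (hK'K : K' ≤ K) (hZcent : Z ≤ Subgroup.center A) {z : D} {g : A}
    (hmain : ∀ q : Q, q • z = z → g⁻¹ * (q : A) * g ∈ K → (q : A) ∈ Z)
    {k₁ k₂ : A} (hk₁ : k₁ ∈ K) (hk₂ : k₂ ∈ K) (h : dcRel Q K' (z, g * k₁) (z, g * k₂)) :
    k₁⁻¹ * k₂ ∈ (K' : Set A) * ((K ⊓ Z : Subgroup A) : Set A) := by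
  obtain ⟨q, k', hk', hpair⟩ := h
  obtain ⟨hz, ha⟩ := Prod.mk.inj hpair
  have hk₂_eq : k₂ = g⁻¹ * q * g * k₁ * k' := by
    rw [← inv_mul_cancel_left g k₂, ha]
    group
  have hconjK : g⁻¹ * (q : A) * g ∈ K := by
    have : g⁻¹ * (q : A) * g = k₂ * k'⁻¹ * k₁⁻¹ := by rw [hk₂_eq]; group
    rw [this]
    exact mul_mem (mul_mem hk₂ (inv_mem (hK'K hk'))) (inv_mem hk₁)
  have hqZ : (q : A) ∈ Z := hmain q hz.symm hconjK
  have hq_comm : ∀ a : A, a * q = q * a := Subgroup.mem_center_iff.mp (hZcent hqZ)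
  have hconj : g⁻¹ * (q : A) * g = q := by rw [mul_assoc, ← hq_comm, inv_mul_cancel_left]
  refine Set.mem_mul.mpr ⟨k', hk', q, ⟨hconj ▸ hconjK, hqZ⟩, ?_⟩
  calc k' * (q : A) = k₁⁻¹ * (k₁ * q) * k' := by rw [hq_comm k']; group
    _ = k₁⁻¹ * k₂ := by rw [hk₂_eq, hconj, hq_comm k₁]; group

theorem dcRel_mk_mul_eq_mk_mul_iff (hK'K : K' ≤ K) (hZQ : Z ≤ Q)
    (hZcent : Z ≤ Subgroup.center A) (hZtriv : ∀ q : Q, (q : A) ∈ Z → ∀ d : D, q • d = d)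
    {z : D} {g : A} (hmain : ∀ q : Q, q • z = z → g⁻¹ * (q : A) * g ∈ K → (q : A) ∈ Z)
    {k₁ k₂ : A} (hk₁ : k₁ ∈ K) (hk₂ : k₂ ∈ K) :
    Quot.mk (dcRel Q K') (z, g * k₁) = Quot.mk _ (z, g * k₂) ↔
      k₁⁻¹ * k₂ ∈ (K' : Set A) * ((K ⊓ Z : Subgroup A) : Set A) := by
  rw [dcRel_mk_eq_mk_iff]
  refine ⟨mem_mul_inf_of_dcRel hK'K hZcent hmain hk₁ hk₂, fun h => ?_⟩
  obtain ⟨k, hk, w, hw, hkw⟩ := Set.mem_mul.mp h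
  have := dcRel_mul_mul_central hZQ hZcent hZtriv z (g * k₁) hk hw.2
  rwa [hkw, mul_assoc, mul_inv_cancel_left] at this

end Fiber

/-- Let `K' ⊆ K`, `Q`, `Z ⊆ Q` be subgroups of `A` with `Z` central in `A`, let `Q`
act on `D` with `Z` acting trivially, and fix `z ∈ D`, `g ∈ A` such that every
`q ∈ Q` with `q • z = z` and `q ∈ gKg⁻¹` lies in `Z`.  Then `K'(K ∩ Z)` is a subgroup
of `K`, and `k ↦ [(z, gk)]` induces a well-defined bijection from `K / (K'(K ∩ Z))`
onto the fiber of `Q\(D × A)/K' → Q\(D × A)/K` over the class of `(z, g)`; in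
particular that fiber has cardinality `|K / (K'(K ∩ Z))|`. -/
theorem double_coset_fiber {A : Type*} [Group A] {D : Type*}
    (Q K K' Z : Subgroup A) [MulAction Q D]
    (hK'K : K' ≤ K) (hZQ : Z ≤ Q) (hZcent : Z ≤ Subgroup.center A)
    (hZtriv : ∀ q : Q, (q : A) ∈ Z → ∀ d : D, q • d = d)
    (z : D) (g : A)
    (hmain : ∀ q : Q, q • z = z → g⁻¹ * (q : A) * g ∈ K → (q : A) ∈ Z) :
    (∃ W : Subgroup A,
        (W : Set A) = (K' : Set A) * ((K ⊓ Z : Subgroup A) : Set A) ∧ W ≤ K) ∧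
    (∃ e : Quot (fun k₁ k₂ : K =>
          ((k₁ : A)⁻¹ * (k₂ : A)) ∈ (K' : Set A) * ((K ⊓ Z : Subgroup A) : Set A)) →
          Quot (dcRel (D := D) Q K'),
        (∀ k : K, e (Quot.mk _ k) = Quot.mk _ (z, g * (k : A))) ∧
        (∀ c, dcProj Q K' K hK'K (e c) = Quot.mk _ (z, g)) ∧
        Function.Injective e ∧
        (∀ y : Quot (dcRel (D := D) Q K'),
          dcProj Q K' K hK'K y = Quot.mk _ (z, g) → ∃ c, e c = y)) ∧
    Nat.card {y : Quot (dcRel (D := D) Q K') //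
        dcProj Q K' K hK'K y = Quot.mk _ (z, g)} =
      Nat.card (Quot (fun k₁ k₂ : K =>
        ((k₁ : A)⁻¹ * (k₂ : A)) ∈ (K' : Set A) * ((K ⊓ Z : Subgroup A) : Set A))) := by
  have : (K ⊓ Z).Normal := Subgroup.normal_of_le_center (inf_le_right.trans hZcent)
  refine ⟨⟨K' ⊔ (K ⊓ Z), Subgroup.mul_normal _ _, sup_le hK'K inf_le_left⟩, ?_⟩
  have key : ∀ k₁ k₂ : K,
      (k₁ : A)⁻¹ * k₂ ∈ (K' : Set A) * ((K ⊓ Z : Subgroup A) : Set A) ↔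
        Quot.mk (dcRel (D := D) Q K') (z, g * k₁) = Quot.mk _ (z, g * k₂) := fun k₁ k₂ =>
    (dcRel_mk_mul_eq_mk_mul_iff hK'K hZQ hZcent hZtriv hmain k₁.2 k₂.2).symm
  set e := Quot.lift _ fun k₁ k₂ h => (key k₁ k₂).1 h
  have he_fiber : ∀ y, dcProj Q K' K hK'K y = Quot.mk _ (z, g) ↔ ∃ c, e c = y := by
    intro y
    rw [dcProj_eq_mk_iff]
    constructor
    · rintro ⟨k, hk, rfl⟩
      exact ⟨Quot.mk _ ⟨k, hk⟩, rfl⟩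
    · rintro ⟨⟨k⟩, rfl⟩
      exact ⟨k, k.2, rfl⟩
  have he_inj : Function.Injective e := Quot.lift_injective_of_iff _ key
  refine ⟨⟨e, fun _ => rfl, fun c => (he_fiber _).2 ⟨c, rfl⟩, he_inj,
    fun y hy => (he_fiber y).1 hy⟩, ?_⟩
  exact (Nat.card_congr (Equiv.subtypeEquivRight he_fiber)).trans
    (Nat.card_range_of_injective he_inj)
end
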